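/- For any N, L, k ∈ ℕ with k ≥ 3, there exists a ReLU network φ₁: ℝ → ℝ with width (k+1)(9(N+1)+k) and depth 7k²L such that φ₁(x) = 0 for all x ∉ [0, k+1] and sup_{x∈ℝ} |𝒩_k(x) − φ₁(x)| ≤ 9 · (2k+2)^k / (k−1)! · (N+1)^{−7(k−1)L}. -/

import Mathlib

open scoped BigOperators ENNReal

noncomputable section

/-- `f` is an affine map `x ↦ A x + b`. -/
def IsAffineMap (din dout : ℕ) (f : (Fin din → ℝ) → (Fin dout → ℝ)) : Prop :=
  ∃ (A : Matrix (Fin dout) (Fin din) ℝ) (b : Fin dout → ℝ),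
    ∀ x i, f x i = (∑ j, A i j * x j) + b i

/-- `ReluNetExact din dout f N L` asserts that `f = T_L ∘ σ ∘ ⋯ ∘ σ ∘ T_1` where each `T_l`
is affine, `σ` is the coordinatewise ReLU `t ↦ max t 0`, all intermediate dimensions are at
most `N` (the width), and there are `L` affine layers (the depth). -/
inductive ReluNetExact : (din dout : ℕ) → ((Fin din → ℝ) → (Fin dout → ℝ)) → ℕ → ℕ → Prop
  | affine {din dout N : ℕ} {f : (Fin din → ℝ) → (Fin dout → ℝ)}
      (hf : IsAffineMap din dout f) : ReluNetExact din dout f N 1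
  | comp {din k dout N L : ℕ} (hk : k ≤ N) {T : (Fin din → ℝ) → (Fin k → ℝ)}
      (hT : IsAffineMap din k T) {g : (Fin k → ℝ) → (Fin dout → ℝ)}
      (hg : ReluNetExact k dout g N L) :
      ReluNetExact din dout (fun x => g (fun i => max (T x i) 0)) N (L + 1)

/-- `f` is representable by a ReLU network with width at most `N` and depth at most `L`. -/
def IsReluNet (din dout : ℕ) (f : (Fin din → ℝ) → (Fin dout → ℝ)) (N L : ℕ) : Prop :=
  ∃ L' ≤ L, ReluNetExact din dout f N L'

/-- Scalar-valued version of `IsReluNet`. -/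
def IsReluNet1 (din : ℕ) (f : (Fin din → ℝ) → ℝ) (N L : ℕ) : Prop :=
  IsReluNet din 1 (fun x _ => f x) N L

/-- The univariate cardinal B-spline of order `k`:
`𝒩_k(x) = (1/(k-1)!) Σ_{l=0}^k (-1)^l (k choose l) σ(x-l)^{k-1}`. -/
def cardBspline (k : ℕ) (x : ℝ) : ℝ :=
  (1 / ((k - 1).factorial : ℝ)) * ∑ l ∈ Finset.range (k + 1),
    (-1 : ℝ) ^ l * (k.choose l : ℝ) * (max (x - (l : ℝ)) 0) ^ (k - 1)

/-!
On `[0, k + 1]` the spline is `𝒩_k(x) = ∑ₗ wₗ sₗ(x) ^ (k - 1)` with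
`sₗ(x) = σ(x - l) / (k + 1) ∈ [0, 1]`. Squares on `[0, 1]` are approximated with error
`b ^ (-2m) / 4` by Yarotsky's `t - ∑_{s < m} b ^ (-2s) I(gˢ t)`, where `g` is a sawtooth with
`b` teeth and `I` interpolates `t - t ^ 2` on the grid `ℤ / b`: the error is exactly
`b ^ (-2m) h(gᵐ t)` with `h(u) = u - u ^ 2`, because `I t + b ^ (-2) h(g t) = h t`.
Polarization turns squares into products, `k - 2` clamped products by `s` give `s ^ (k - 1)`,
and the `k + 1` branches run in parallel, each layer being `σ` of an affine map. Finally,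
subtracting the affine function of the ramp `clamp01 (x - k)` that matches the values at `0` and
`k + 1` makes the network vanish off `[0, k + 1]` and at most doubles the error, since `𝒩_k`
vanishes at both endpoints.
-/

open Finset

def relu (t : ℝ) : ℝ := max t 0

lemma relu_of_nonneg {t : ℝ} (h : 0 ≤ t) : relu t = t := max_eq_left h

lemma relu_of_nonpos {t : ℝ} (h : t ≤ 0) : relu t = 0 := max_eq_right h

lemma relu_add_relu_neg (t : ℝ) : relu t + relu (-t) = |t| := by
  rcases le_total t 0 with h | h
  · rw [relu_of_nonpos h, relu_of_nonneg (neg_nonneg.2 h), abs_of_nonpos h, zero_add]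
  · rw [relu_of_nonneg h, relu_of_nonpos (neg_nonpos.2 h), abs_of_nonneg h, add_zero]

/-- The projection of `ℝ` onto `[0, 1]`. -/
def clamp01 (a : ℝ) : ℝ := relu a - relu (a - 1)

lemma clamp01_of_mem {a : ℝ} (h0 : 0 ≤ a) (h1 : a ≤ 1) : clamp01 a = a := by
  rw [clamp01, relu_of_nonneg h0, relu_of_nonpos (by linarith), sub_zero]

lemma clamp01_of_nonpos {a : ℝ} (h : a ≤ 0) : clamp01 a = 0 := by
  rw [clamp01, relu_of_nonpos h, relu_of_nonpos (by linarith), sub_zero]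

lemma clamp01_of_one_le {a : ℝ} (h : 1 ≤ a) : clamp01 a = 1 := by
  rw [clamp01, relu_of_nonneg (by linarith), relu_of_nonneg (by linarith)]
  ring

lemma clamp01_mem_Icc (a : ℝ) : clamp01 a ∈ Set.Icc (0 : ℝ) 1 := by
  rcases le_total a 0 with h | h
  · simp [clamp01_of_nonpos h]
  rcases le_total a 1 with h' | h'
  · rw [clamp01_of_mem h h']
    exact ⟨h, h'⟩
  · simp [clamp01_of_one_le h']

lemma abs_clamp01_sub_le {a c : ℝ} (hc : c ∈ Set.Icc (0 : ℝ) 1) :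
    |clamp01 a - c| ≤ |a - c| := by
  obtain ⟨hc0, hc1⟩ := hc
  rcases le_total a 0 with h | h
  · rw [clamp01_of_nonpos h, abs_of_nonpos (by linarith), abs_of_nonpos (by linarith)]
    linarith
  rcases le_total a 1 with h' | h'
  · rw [clamp01_of_mem h h']
  · rw [clamp01_of_one_le h', abs_of_nonneg (by linarith), abs_of_nonneg (by linarith)]
    linarith

section Sawtooth

variable (b : ℕ)

def sawtoothCoeff (i : ℕ) : ℝ := if i = 0 then b else (-1) ^ i * (2 * b)

def parabolaCoeff (i : ℕ) : ℝ := if i = 0 then (b - 1) / b else -(2 / b)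

/-- The continuous piecewise linear map sending each of the `b` cells `[j / b, (j + 1) / b]`
of `[0, 1]` onto `[0, 1]`, increasing on even cells and decreasing on odd ones. -/
def sawtooth (t : ℝ) : ℝ := ∑ i : Fin b, sawtoothCoeff b i * relu (t - i / b)

/-- The piecewise linear interpolant of `t ↦ t - t ^ 2` at the nodes `j / b`. -/
def parabolaInterp (t : ℝ) : ℝ := ∑ i : Fin b, parabolaCoeff b i * relu (t - i / b)

variable {b}

lemma exists_cell_of_mem_Icc (hb : 0 < b) {t : ℝ} (ht : t ∈ Set.Icc (0 : ℝ) 1) :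
    ∃ j < b, (j : ℝ) ≤ b * t ∧ b * t ≤ j + 1 := by
  obtain ⟨h0, h1⟩ := ht
  have hbt : 0 ≤ (b : ℝ) * t := by positivity
  by_cases hfl : ⌊(b : ℝ) * t⌋₊ < b
  · exact ⟨_, hfl, Nat.floor_le hbt, (Nat.lt_floor_add_one _).le⟩
  · have hb1 : ((b - 1 : ℕ) : ℝ) = b - 1 := by rw [Nat.cast_sub hb, Nat.cast_one]
    have hle : (b : ℝ) ≤ b * t := by
      calc (b : ℝ) ≤ ⌊(b : ℝ) * t⌋₊ := by exact_mod_cast not_lt.1 hfl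
        _ ≤ b * t := Nat.floor_le hbt
    refine ⟨b - 1, by omega, ?_, ?_⟩ <;> rw [hb1] <;> nlinarith

lemma sum_relu_eq_of_cell {j : ℕ} (hj : j < b) {t : ℝ} (h1 : (j : ℝ) ≤ b * t)
    (h2 : b * t ≤ j + 1) (a : ℕ → ℝ) :
    ∑ i : Fin b, a i * relu (t - i / b) = ∑ i ∈ range (j + 1), a i * (t - i / b) := by
  have hb : (0 : ℝ) < b := by exact_mod_cast hj.trans_le' (Nat.zero_le j)
  rw [Fin.sum_univ_eq_sum_range (fun i => a i * relu (t - i / b)),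
    ← sum_subset (range_subset_range.2 (by omega : j + 1 ≤ b))]
  · refine sum_congr rfl fun i hi => ?_
    have hi : (i : ℝ) ≤ j := by exact_mod_cast Nat.lt_succ_iff.1 (mem_range.1 hi)
    rw [relu_of_nonneg (sub_nonneg.2 ((div_le_iff₀ hb).2 (by linarith)))]
  · intro i _ hi
    have hi : (j : ℝ) + 1 ≤ i := by exact_mod_cast not_lt.1 (mt mem_range.2 hi)
    rw [relu_of_nonpos (sub_nonpos.2 ((le_div_iff₀ hb).2 (by linarith))), mul_zero]

lemma sum_sawtoothCoeff_mul (hb : b ≠ 0) (t : ℝ) (j : ℕ) :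
    ∑ i ∈ range (j + 1), sawtoothCoeff b i * (t - i / b) =
      if Even j then b * t - j else j + 1 - b * t := by
  have hb' : (b : ℝ) ≠ 0 := Nat.cast_ne_zero.2 hb
  induction j with
  | zero => simp [sawtoothCoeff]
  | succ j ih =>
    rw [sum_range_succ, ih, sawtoothCoeff, if_neg j.succ_ne_zero]
    rcases Nat.even_or_odd j with hj | hj
    · rw [if_pos hj, if_neg (Nat.not_even_iff_odd.2 hj.add_one), hj.add_one.neg_one_pow]
      push_cast
      field_simp
      ring
    · rw [if_neg (Nat.not_even_iff_odd.2 hj), if_pos hj.add_one, hj.add_one.neg_one_pow]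
      push_cast
      field_simp
      ring

lemma sum_parabolaCoeff_mul (hb : b ≠ 0) (t : ℝ) (j : ℕ) :
    ∑ i ∈ range (j + 1), parabolaCoeff b i * (t - i / b) =
      (j * (b - j) + (b * t - j) * (b - 2 * j - 1)) / b ^ 2 := by
  have hb' : (b : ℝ) ≠ 0 := Nat.cast_ne_zero.2 hb
  induction j with
  | zero =>
    simp only [zero_add, range_one, sum_singleton, parabolaCoeff, if_true, CharP.cast_eq_zero]
    field_simp
    ring
  | succ j ih =>
    rw [sum_range_succ, ih, parabolaCoeff, if_neg j.succ_ne_zero]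
    push_cast
    field_simp
    ring

/-- On the cell containing `t`, `sawtooth b t` is `u` or `1 - u` with `u = b t - j ∈ [0, 1]`. -/
lemma sawtooth_mem_Icc_and_parabolaInterp_add (hb : 0 < b) {t : ℝ}
    (ht : t ∈ Set.Icc (0 : ℝ) 1) :
    sawtooth b t ∈ Set.Icc (0 : ℝ) 1 ∧
      parabolaInterp b t + ((b : ℝ) ^ 2)⁻¹ * (sawtooth b t - sawtooth b t ^ 2) =
        t - t ^ 2 := by
  obtain ⟨j, hj, h1, h2⟩ := exists_cell_of_mem_Icc hb ht
  have hb' : (b : ℝ) ≠ 0 := by positivity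
  rw [sawtooth, parabolaInterp, sum_relu_eq_of_cell hj h1 h2, sum_relu_eq_of_cell hj h1 h2,
    sum_sawtoothCoeff_mul hb.ne' t j, sum_parabolaCoeff_mul hb.ne' t j]
  split_ifs <;> exact ⟨⟨by linarith, by linarith⟩, by field_simp; ring⟩

lemma sawtooth_mem_Icc (hb : 0 < b) {t : ℝ} (ht : t ∈ Set.Icc (0 : ℝ) 1) :
    sawtooth b t ∈ Set.Icc (0 : ℝ) 1 :=
  (sawtooth_mem_Icc_and_parabolaInterp_add hb ht).1

lemma iterate_sawtooth_mem_Icc (hb : 0 < b) {t : ℝ} (ht : t ∈ Set.Icc (0 : ℝ) 1) (n : ℕ) :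
    (sawtooth b)^[n] t ∈ Set.Icc (0 : ℝ) 1 := by
  induction n with
  | zero => exact ht
  | succ n ih => exact Function.iterate_succ_apply' (sawtooth b) n t ▸ sawtooth_mem_Icc hb ih

end Sawtooth

/-- Yarotsky's approximation of `t ^ 2` on `[0, 1]` by `m` compositions of sawtooth maps. -/
def sqApprox (b m : ℕ) (t : ℝ) : ℝ :=
  t - ∑ s ∈ range m, ((b : ℝ) ^ 2)⁻¹ ^ s * parabolaInterp b ((sawtooth b)^[s] t)

lemma sqApprox_succ (b m : ℕ) (t : ℝ) :
    sqApprox b (m + 1) t =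
      sqApprox b m t - ((b : ℝ) ^ 2)⁻¹ ^ m * parabolaInterp b ((sawtooth b)^[m] t) := by
  rw [sqApprox, sqApprox, sum_range_succ]
  ring

lemma sqApprox_eq (b m : ℕ) (hb : 0 < b) {t : ℝ} (ht : t ∈ Set.Icc (0 : ℝ) 1) :
    sqApprox b m t =
      t ^ 2 + ((b : ℝ) ^ 2)⁻¹ ^ m * ((sawtooth b)^[m] t - ((sawtooth b)^[m] t) ^ 2) := by
  induction m with
  | zero => simp [sqApprox]
  | succ m ih =>
    have key := (sawtooth_mem_Icc_and_parabolaInterp_add hb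
      (iterate_sawtooth_mem_Icc hb ht m)).2
    rw [sqApprox_succ, ih, Function.iterate_succ_apply', pow_succ]
    linear_combination (-((b : ℝ) ^ 2)⁻¹ ^ m) * key

lemma sq_le_sqApprox (b m : ℕ) (hb : 0 < b) {t : ℝ} (ht : t ∈ Set.Icc (0 : ℝ) 1) :
    t ^ 2 ≤ sqApprox b m t := by
  obtain ⟨h0, h1⟩ := iterate_sawtooth_mem_Icc hb ht m
  rw [sqApprox_eq b m hb ht]
  have : 0 ≤ (sawtooth b)^[m] t - ((sawtooth b)^[m] t) ^ 2 := by nlinarith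
  have : 0 ≤ ((b : ℝ) ^ 2)⁻¹ ^ m := by positivity
  nlinarith

lemma abs_sqApprox_sub_sq_le (b m : ℕ) (hb : 0 < b) {t : ℝ} (ht : t ∈ Set.Icc (0 : ℝ) 1) :
    |sqApprox b m t - t ^ 2| ≤ 1 / 4 * ((b : ℝ) ^ 2)⁻¹ ^ m := by
  obtain ⟨h0, h1⟩ := iterate_sawtooth_mem_Icc hb ht m
  set u := (sawtooth b)^[m] t
  have hu : |u - u ^ 2| ≤ 1 / 4 := by
    rw [abs_le]
    constructor <;> nlinarith [sq_nonneg (u - 1 / 2)]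
  rw [sqApprox_eq b m hb ht, add_sub_cancel_left, abs_mul, abs_of_nonneg (by positivity), mul_comm]
  exact mul_le_mul_of_nonneg_right hu (by positivity)

/-- Approximate product through `x y = ((x + y) / 2) ^ 2 - ((x - y) / 2) ^ 2`. -/
def mulApprox (b m : ℕ) (x y : ℝ) : ℝ :=
  sqApprox b m ((x + y) / 2) - sqApprox b m |(x - y) / 2|

lemma abs_mulApprox_sub_mul_le (b m : ℕ) (hb : 0 < b) {x y : ℝ} (hx : x ∈ Set.Icc (0 : ℝ) 1)
    (hy : y ∈ Set.Icc (0 : ℝ) 1) :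
    |mulApprox b m x y - x * y| ≤ 1 / 2 * ((b : ℝ) ^ 2)⁻¹ ^ m := by
  obtain ⟨hx0, hx1⟩ := hx
  obtain ⟨hy0, hy1⟩ := hy
  have e₁ := abs_sqApprox_sub_sq_le b m hb (t := (x + y) / 2) ⟨by linarith, by linarith⟩
  have e₂ := abs_sqApprox_sub_sq_le b m hb (t := |(x - y) / 2|)
    ⟨abs_nonneg _, abs_le.2 ⟨by linarith, by linarith⟩⟩
  have hxy : x * y = ((x + y) / 2) ^ 2 - |(x - y) / 2| ^ 2 := by rw [sq_abs]; ring
  calc |mulApprox b m x y - x * y|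
      = |(sqApprox b m ((x + y) / 2) - ((x + y) / 2) ^ 2) -
          (sqApprox b m |(x - y) / 2| - |(x - y) / 2| ^ 2)| := by
        rw [mulApprox, hxy]; ring_nf
    _ ≤ _ := abs_sub _ _
    _ ≤ _ := by linarith

/-- `powApprox b m j s` approximates `s ^ (j + 1)` by `j` approximate multiplications by `s`,
each clamped back into `[0, 1]`. -/
def powApprox (b m : ℕ) : ℕ → ℝ → ℝ
  | 0, s => s
  | j + 1, s => clamp01 (mulApprox b m (powApprox b m j s) s)

lemma powApprox_mem_Icc (b m : ℕ) {s : ℝ} (hs : s ∈ Set.Icc (0 : ℝ) 1) :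
    ∀ j, powApprox b m j s ∈ Set.Icc (0 : ℝ) 1
  | 0 => hs
  | _ + 1 => clamp01_mem_Icc _

lemma abs_powApprox_sub_pow_le (b m : ℕ) (hb : 0 < b) {s : ℝ} (hs : s ∈ Set.Icc (0 : ℝ) 1)
    (j : ℕ) : |powApprox b m j s - s ^ (j + 1)| ≤ j * (1 / 2 * ((b : ℝ) ^ 2)⁻¹ ^ m) := by
  induction j with
  | zero => simp [powApprox]
  | succ j ih =>
    have hsj : s ^ (j + 2) ∈ Set.Icc (0 : ℝ) 1 :=
      ⟨pow_nonneg hs.1 _, pow_le_one₀ hs.1 hs.2⟩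
    have hmul := abs_mulApprox_sub_mul_le b m hb (powApprox_mem_Icc b m hs j) hs
    have hprod : |powApprox b m j s * s - s ^ (j + 2)| ≤ |powApprox b m j s - s ^ (j + 1)| := by
      rw [pow_succ, ← sub_mul, abs_mul, abs_of_nonneg hs.1]
      exact mul_le_of_le_one_right (abs_nonneg _) hs.2
    calc |powApprox b m (j + 1) s - s ^ (j + 1 + 1)|
        ≤ |mulApprox b m (powApprox b m j s) s - s ^ (j + 2)| := abs_clamp01_sub_le hsj
      _ ≤ |mulApprox b m (powApprox b m j s) s - powApprox b m j s * s|
          + |powApprox b m j s * s - s ^ (j + 2)| := abs_sub_le _ _ _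
      _ ≤ _ := by push_cast; linarith

lemma sum_alternating_choose_mul_sub_pow {k j : ℕ} (hj : j < k) (x : ℝ) :
    ∑ l ∈ range (k + 1), (-1 : ℝ) ^ l * k.choose l * (x - l) ^ j = 0 := by
  have h := congrFun (fwdDiff_iter_pow_eq_zero_of_lt (R := ℝ) hj) (x - k)
  rw [fwdDiff_iter_eq_sum_shift, Pi.zero_apply] at h
  rw [← sum_range_reflect, ← h]
  refine sum_congr rfl fun l hl => ?_
  have hl : l ≤ k := Nat.lt_succ_iff.1 (mem_range.1 hl)
  rw [Nat.add_sub_cancel, Nat.choose_symm hl, Nat.cast_sub hl, zsmul_eq_mul, nsmul_eq_mul]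
  push_cast
  ring

section BSpline

variable {k : ℕ}

lemma cardBspline_eq_zero_of_nonpos (hk : 2 ≤ k) {x : ℝ} (hx : x ≤ 0) :
    cardBspline k x = 0 := by
  rw [cardBspline, sum_eq_zero (fun l _ => ?_), mul_zero]
  rw [max_eq_right (by linarith [(l.cast_nonneg : (0 : ℝ) ≤ l)]), zero_pow (by omega), mul_zero]

lemma cardBspline_eq_zero_of_le (hk : 1 ≤ k) {x : ℝ} (hx : k ≤ x) : cardBspline k x = 0 := by
  rw [cardBspline, sum_congr rfl (g := fun l => (-1 : ℝ) ^ l * k.choose l * (x - l) ^ (k - 1)),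
    sum_alternating_choose_mul_sub_pow (by omega) x, mul_zero]
  intro l hl
  have hl : (l : ℝ) ≤ k := by exact_mod_cast Nat.lt_succ_iff.1 (mem_range.1 hl)
  rw [max_eq_left (by linarith)]

/-- `scaledRamp k l x = σ(x - l) / (k + 1)` for `x ≤ k + 1`, frozen for `x ≥ k + 1`. -/
def scaledRamp (k l : ℕ) (x : ℝ) : ℝ := (relu (x - l) - relu (x - (k + 1))) / (k + 1)

lemma scaledRamp_of_le {l : ℕ} {x : ℝ} (hx : x ≤ k + 1) :
    scaledRamp k l x = relu (x - l) / (k + 1) := by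
  rw [scaledRamp, relu_of_nonpos (t := x - (k + 1)) (by linarith), sub_zero]

lemma scaledRamp_of_nonpos {l : ℕ} {x : ℝ} (hx : x ≤ 0) : scaledRamp k l x = 0 := by
  rw [scaledRamp_of_le (by linarith [(k.cast_nonneg : (0 : ℝ) ≤ k)]),
    relu_of_nonpos (by linarith [(l.cast_nonneg : (0 : ℝ) ≤ l)]), zero_div]

lemma scaledRamp_of_ge {l : ℕ} (hl : l ≤ k + 1) {x : ℝ} (hx : k + 1 ≤ x) :
    scaledRamp k l x = scaledRamp k l (k + 1) := by
  have hl : (l : ℝ) ≤ k + 1 := by exact_mod_cast hl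
  rw [scaledRamp, scaledRamp, relu_of_nonneg (by linarith), relu_of_nonneg (by linarith),
    relu_of_nonneg (by linarith), relu_of_nonneg (by linarith)]
  ring_nf

lemma scaledRamp_mem_Icc {l : ℕ} (hl : l ≤ k + 1) (x : ℝ) :
    scaledRamp k l x ∈ Set.Icc (0 : ℝ) 1 := by
  have hl : (l : ℝ) ≤ k + 1 := by exact_mod_cast hl
  have hk : (0 : ℝ) < k + 1 := by positivity
  rw [scaledRamp, Set.mem_Icc, div_nonneg_iff, div_le_one hk]
  unfold relu
  constructor
  · left
    exact ⟨sub_nonneg.2 (max_le_max_right 0 (by linarith)), hk.le⟩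
  · rcases le_total x (k + 1) with h | h
    · rw [max_eq_right (by linarith : x - (k + 1) ≤ 0)]
      have := max_le (by linarith [(l.cast_nonneg : (0 : ℝ) ≤ l)] : x - l ≤ k + 1) hk.le
      linarith
    · rw [max_eq_left (by linarith : 0 ≤ x - (k + 1)), max_eq_left (by linarith : 0 ≤ x - l)]
      linarith [(l.cast_nonneg : (0 : ℝ) ≤ l)]

lemma add_one_mul_scaledRamp_self (x : ℝ) : (k + 1) * scaledRamp k k x = clamp01 (x - k) := by
  rw [scaledRamp, mul_div_cancel₀ _ (by positivity), clamp01, sub_sub]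

def splineWeight (k l : ℕ) : ℝ :=
  (-1) ^ l * k.choose l * ((k : ℝ) + 1) ^ (k - 1) / (k - 1).factorial

lemma cardBspline_eq_sum_scaledRamp {x : ℝ} (hx : x ≤ k + 1) :
    cardBspline k x = ∑ l ∈ range (k + 1), splineWeight k l * scaledRamp k l x ^ (k - 1) := by
  rw [cardBspline, mul_sum]
  refine sum_congr rfl fun l _ => ?_
  rw [scaledRamp_of_le hx, splineWeight, div_pow, relu]
  field_simp

/-- Substituting `powApprox` for the powers in `cardBspline_eq_sum_scaledRamp`. -/
def truncPowSumApprox (b m k : ℕ) (x : ℝ) : ℝ :=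
  ∑ l ∈ range (k + 1), splineWeight k l * powApprox b m (k - 2) (scaledRamp k l x)

lemma abs_truncPowSumApprox_sub_cardBspline_le {b : ℕ} (m : ℕ) (hb : 0 < b) (hk : 2 ≤ k)
    {x : ℝ} (hx : x ∈ Set.Icc 0 ((k : ℝ) + 1)) :
    |truncPowSumApprox b m k x - cardBspline k x| ≤
      2 ^ k * ((k : ℝ) + 1) ^ (k - 1) / (k - 1).factorial *
        ((k - 2 : ℕ) * (1 / 2 * ((b : ℝ) ^ 2)⁻¹ ^ m)) := by
  set ε : ℝ := (k - 2 : ℕ) * (1 / 2 * ((b : ℝ) ^ 2)⁻¹ ^ m)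
  have hterm : ∀ l ∈ range (k + 1),
      |splineWeight k l * powApprox b m (k - 2) (scaledRamp k l x) -
          splineWeight k l * scaledRamp k l x ^ (k - 1)| ≤
        k.choose l * ((k : ℝ) + 1) ^ (k - 1) / (k - 1).factorial * ε := by
    intro l hl
    have hs := scaledRamp_mem_Icc (k := k) (by linarith [mem_range.1 hl] : l ≤ k + 1) x
    have herr := abs_powApprox_sub_pow_le b m hb hs (k - 2)
    rw [show k - 2 + 1 = k - 1 by omega] at herr
    rw [← mul_sub, abs_mul, splineWeight, abs_div, abs_mul, abs_mul, abs_pow, abs_neg, abs_one,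
      one_pow, one_mul, Nat.abs_cast, Nat.abs_cast,
      abs_of_pos (by positivity : (0 : ℝ) < ((k : ℝ) + 1) ^ (k - 1))]
    gcongr
  rw [truncPowSumApprox, cardBspline_eq_sum_scaledRamp hx.2, ← sum_sub_distrib]
  refine (abs_sum_le_sum_abs _ _).trans ((sum_le_sum hterm).trans (le_of_eq ?_))
  rw [← sum_mul, ← sum_div, ← sum_mul]
  norm_cast
  rw [Nat.sum_range_choose]

/-- `truncPowSumApprox` corrected by an affine function of `clamp01 (x - k)` so that it vanishes
outside `[0, k + 1]`; the correction costs no more than the error at the two endpoints. -/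
def bsplineApprox (b m k : ℕ) (x : ℝ) : ℝ :=
  truncPowSumApprox b m k x - truncPowSumApprox b m k 0 -
    (truncPowSumApprox b m k (k + 1) - truncPowSumApprox b m k 0) * clamp01 (x - k)

lemma bsplineApprox_eq_zero {b m : ℕ} {x : ℝ} (hx : x ∉ Set.Icc 0 ((k : ℝ) + 1)) :
    bsplineApprox b m k x = 0 := by
  rw [Set.mem_Icc, not_and_or, not_le, not_le] at hx
  rcases hx with hx | hx
  · have hconst : truncPowSumApprox b m k x = truncPowSumApprox b m k 0 := by
      simp only [truncPowSumApprox, scaledRamp_of_nonpos hx.le, scaledRamp_of_nonpos le_rfl]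
    rw [bsplineApprox, hconst, clamp01_of_nonpos (by linarith [(k.cast_nonneg : (0 : ℝ) ≤ k)])]
    ring
  · have hconst : truncPowSumApprox b m k x = truncPowSumApprox b m k (k + 1) :=
      sum_congr rfl fun l hl => by
        rw [scaledRamp_of_ge (by linarith [mem_range.1 hl]) hx.le]
    rw [bsplineApprox, hconst, clamp01_of_one_le (by linarith)]
    ring

lemma abs_cardBspline_sub_bsplineApprox_le {b : ℕ} (m : ℕ) (hb : 0 < b) (hk : 2 ≤ k)
    (x : ℝ) :
    |cardBspline k x - bsplineApprox b m k x| ≤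
      2 * (2 ^ k * ((k : ℝ) + 1) ^ (k - 1) / (k - 1).factorial *
        ((k - 2 : ℕ) * (1 / 2 * ((b : ℝ) ^ 2)⁻¹ ^ m))) := by
  have hE : 0 ≤ 2 ^ k * ((k : ℝ) + 1) ^ (k - 1) / (k - 1).factorial *
      ((k - 2 : ℕ) * (1 / 2 * ((b : ℝ) ^ 2)⁻¹ ^ m)) := by positivity
  by_cases hx : x ∈ Set.Icc 0 ((k : ℝ) + 1)
  · have hk0 : (0 : ℝ) ≤ k := k.cast_nonneg
    have e₀ := abs_truncPowSumApprox_sub_cardBspline_le m hb hk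
      (⟨le_rfl, by linarith⟩ : (0 : ℝ) ∈ Set.Icc 0 ((k : ℝ) + 1))
    have e₁ := abs_truncPowSumApprox_sub_cardBspline_le m hb hk
      (⟨by linarith, le_rfl⟩ : (k : ℝ) + 1 ∈ Set.Icc 0 ((k : ℝ) + 1))
    have eₓ := abs_truncPowSumApprox_sub_cardBspline_le m hb hk hx
    rw [cardBspline_eq_zero_of_nonpos hk le_rfl, sub_zero, abs_le] at e₀
    rw [cardBspline_eq_zero_of_le (by omega) (by linarith), sub_zero, abs_le] at e₁
    rw [abs_le] at eₓ
    set E := 2 ^ k * ((k : ℝ) + 1) ^ (k - 1) / (k - 1).factorial *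
      ((k - 2 : ℕ) * (1 / 2 * ((b : ℝ) ^ 2)⁻¹ ^ m))
    obtain ⟨hr0, hr1⟩ := clamp01_mem_Icc (x - k)
    rw [bsplineApprox, abs_le]
    constructor <;>
      nlinarith [mul_nonneg hr0 (by linarith : 0 ≤ E - truncPowSumApprox b m k (k + 1)),
        mul_nonneg hr0 (by linarith : 0 ≤ E + truncPowSumApprox b m k (k + 1)),
        mul_nonneg (sub_nonneg.2 hr1) (by linarith : 0 ≤ E - truncPowSumApprox b m k 0),
        mul_nonneg (sub_nonneg.2 hr1) (by linarith : 0 ≤ E + truncPowSumApprox b m k 0)]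
  · have hspline : cardBspline k x = 0 := by
      rw [Set.mem_Icc, not_and_or, not_le, not_le] at hx
      rcases hx with hx | hx
      · exact cardBspline_eq_zero_of_nonpos hk hx.le
      · exact cardBspline_eq_zero_of_le (by omega) (by linarith)
    rw [hspline, bsplineApprox_eq_zero hx, sub_zero, abs_zero]
    linarith

end BSpline

@[fun_prop]
def IsAffineFun {P : Type*} [Fintype P] (f : (P → ℝ) → ℝ) : Prop :=
  ∃ (a : P → ℝ) (c : ℝ), ∀ y, f y = ∑ p, a p * y p + c

namespace IsAffineFun

variable {P : Type*} [Fintype P]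

@[fun_prop]
lemma const (c : ℝ) : IsAffineFun fun _ : P → ℝ => c := ⟨0, c, by simp⟩

@[fun_prop]
lemma apply (p : P) : IsAffineFun fun y : P → ℝ => y p := by
  classical
  exact ⟨Pi.single p 1, 0, fun y => by simp [Pi.single_apply]⟩

@[fun_prop]
lemma add {f g : (P → ℝ) → ℝ} (hf : IsAffineFun f) (hg : IsAffineFun g) :
    IsAffineFun fun y => f y + g y := by
  obtain ⟨a, c, hf⟩ := hf
  obtain ⟨a', c', hg⟩ := hg
  exact ⟨a + a', c + c', fun y => by
    simp only [hf, hg, Pi.add_apply, add_mul, sum_add_distrib]; ring⟩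

@[fun_prop]
lemma const_mul {f : (P → ℝ) → ℝ} (hf : IsAffineFun f) (r : ℝ) :
    IsAffineFun fun y => r * f y := by
  obtain ⟨a, c, hf⟩ := hf
  exact ⟨r • a, r * c, fun y => by
    simp only [hf, Pi.smul_apply, smul_eq_mul, mul_add, mul_sum, mul_assoc]⟩

@[fun_prop]
lemma neg {f : (P → ℝ) → ℝ} (hf : IsAffineFun f) : IsAffineFun fun y => -f y := by
  simpa using hf.const_mul (-1)

@[fun_prop]
lemma sub {f g : (P → ℝ) → ℝ} (hf : IsAffineFun f) (hg : IsAffineFun g) :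
    IsAffineFun fun y => f y - g y := by
  simpa [sub_eq_add_neg] using hf.add hg.neg

@[fun_prop]
lemma div_const {f : (P → ℝ) → ℝ} (hf : IsAffineFun f) (r : ℝ) :
    IsAffineFun fun y => f y / r := by
  simpa [div_eq_mul_inv, mul_comm] using hf.const_mul r⁻¹

@[fun_prop]
lemma sum {ι : Type*} (s : Finset ι) {f : ι → (P → ℝ) → ℝ}
    (hf : ∀ i ∈ s, IsAffineFun (f i)) : IsAffineFun fun y => ∑ i ∈ s, f i y := by
  classical
  induction s using Finset.induction_on with
  | empty => simpa using const (P := P) 0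
  | insert i s hi ih =>
    simp only [sum_insert hi]
    exact (hf i (mem_insert_self i s)).add (ih fun j hj => hf j (mem_insert_of_mem hj))

lemma comp {C : Type*} [Fintype C] {f : (C → ℝ) → ℝ} (hf : IsAffineFun f)
    {G : (P → ℝ) → C → ℝ} (hG : ∀ c, IsAffineFun fun y => G y c) :
    IsAffineFun fun y => f (G y) := by
  obtain ⟨a, e, hf⟩ := hf
  simp only [hf]
  exact (sum _ fun c _ => (hG c).const_mul (a c)).add (const e)

end IsAffineFun

section ReluBlock

variable {P R S : Type*}

def reluLayer (T : (P → ℝ) → R → ℝ) : (P → ℝ) → R → ℝ := fun y r => relu (T y r)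

/-- `F` is computed by `n` ReLU layers of width at most `W`: put in front of any ReLU network,
however the coordinates of `P` and `R` are enumerated, it adds exactly `n` to the depth. -/
def IsReluBlock (F : (P → ℝ) → R → ℝ) (W n : ℕ) : Prop :=
  ∀ ⦃din dr dout D : ℕ⦄ (eP : Fin din ≃ P) (eR : Fin dr ≃ R)
    ⦃g : (Fin dr → ℝ) → Fin dout → ℝ⦄,
    ReluNetExact dr dout g W D →
      ReluNetExact din dout (fun x => g fun i => F (fun p => x (eP.symm p)) (eR i)) W (D + n)

lemma isReluBlock_reluLayer [Fintype P] [Fintype R] {T : (P → ℝ) → R → ℝ}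
    (hT : ∀ r, IsAffineFun fun y => T y r) {W : ℕ} (hW : Fintype.card R ≤ W) :
    IsReluBlock (reluLayer T) W 1 := by
  intro din dr dout D eP eR g hg
  have hdr : dr ≤ W := by simpa using (Fintype.card_congr eR).trans_le hW
  choose a c hac using hT
  simp only at hac
  refine ReluNetExact.comp hdr (T := fun x i => T (fun p => x (eP.symm p)) (eR i))
    ⟨fun i j => a (eR i) (eP j), fun i => c (eR i), fun x i => ?_⟩ hg
  dsimp only
  rw [hac, ← eP.sum_comp]
  simp only [Equiv.symm_apply_apply]

lemma IsReluBlock.comp [Fintype R] {F : (P → ℝ) → R → ℝ} {G : (R → ℝ) → S → ℝ}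
    {W n n' : ℕ} (hF : IsReluBlock F W n) (hG : IsReluBlock G W n') :
    IsReluBlock (fun x => G (F x)) W (n + n') := by
  intro din ds dout D eP eS g hg
  have h := hF eP (Fintype.equivFin R).symm (hG (Fintype.equivFin R).symm eS hg)
  simp only [Equiv.symm_symm, Equiv.symm_apply_apply] at h
  rwa [← add_assoc, add_right_comm]

lemma IsReluBlock.iterate_comp [Fintype R] {F : (P → ℝ) → R → ℝ} {G : (R → ℝ) → R → ℝ}
    {W n n' : ℕ} (hF : IsReluBlock F W n) (hG : IsReluBlock G W n') (j : ℕ) :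
    IsReluBlock (fun x => G^[j] (F x)) W (n + j * n') := by
  induction j with
  | zero => simpa using hF
  | succ j ih =>
    have h := ih.comp hG
    simp only [← Function.iterate_succ_apply' G] at h
    rwa [add_mul, one_mul, ← add_assoc]

lemma IsReluBlock.reluNetExact_comp [Fintype R] {F : (P → ℝ) → R → ℝ} {W n : ℕ}
    (hF : IsReluBlock F W n) {out : (R → ℝ) → ℝ} (hout : IsAffineFun out) {din : ℕ}
    (eP : Fin din ≃ P) :
    ReluNetExact din 1 (fun x _ => out (F fun p => x (eP.symm p))) W (n + 1) := by
  obtain ⟨a, c, hac⟩ := hout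
  set e := (Fintype.equivFin R).symm
  have hg : ReluNetExact (Fintype.card R) 1 (fun z _ => out fun r => z (e.symm r)) W 1 :=
    .affine ⟨fun _ j => a (e j), fun _ => c, fun z _ => by
      dsimp only
      rw [hac, ← e.sum_comp]
      simp only [Equiv.symm_apply_apply]⟩
  have h := hF eP e hg
  simp only [Equiv.apply_symm_apply] at h
  rwa [add_comm]

def liftBranch {ι C D : Type*} (F : (C → ℝ) → D → ℝ) (y : ι × C → ℝ) (p : ι × D) : ℝ :=
  F (fun c => y (p.1, c)) p.2

lemma isReluBlock_liftBranch_reluLayer {ι C D : Type*} [Fintype ι] [Fintype C] [Fintype D]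
    {T : (C → ℝ) → D → ℝ} (hT : ∀ d, IsAffineFun fun z => T z d) {W : ℕ}
    (hW : Fintype.card ι * Fintype.card D ≤ W) :
    IsReluBlock (liftBranch (ι := ι) (reluLayer T)) W 1 :=
  isReluBlock_reluLayer (T := liftBranch T) (fun p => (hT p.2).comp fun c => .apply (p.1, c))
    (by rwa [Fintype.card_prod])

lemma liftBranch_iterate {ι C : Type*} (F : (C → ℝ) → C → ℝ) (j : ℕ) (y : ι × C → ℝ) (l : ι) :
    (fun c => (liftBranch F)^[j] y (l, c)) = F^[j] fun c => y (l, c) := by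
  induction j generalizing y with
  | zero => rfl
  | succ j ih =>
    rw [Function.iterate_succ_apply', Function.iterate_succ_apply', ← ih]
    rfl

end ReluBlock

/-- A branch state encoding a number `q = pos - neg ∈ [0, 1]` together with the branch
argument `s`. -/
inductive QChan
  | pos | neg | arg

inductive PolarChan
  | mean | diffPos | diffNeg | arg

/-- Channels of one squaring network: the ramps `σ(u - i / b)` and the running approximation. -/
inductive SqChan (b : ℕ)
  | hat (i : Fin b)
  | acc

/-- Two squaring networks (`true` for `((q + s) / 2) ^ 2`, `false` for `((q - s) / 2) ^ 2`)
and the branch argument. -/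
inductive MulChan (b : ℕ)
  | sq (w : Bool) (c : SqChan b)
  | arg

def QChan.equivFin : QChan ≃ Fin 3 where
  toFun | .pos => 0 | .neg => 1 | .arg => 2
  invFun := ![.pos, .neg, .arg]
  left_inv := by rintro (_ | _ | _) <;> rfl
  right_inv := by intro i; fin_cases i <;> rfl

def PolarChan.equivFin : PolarChan ≃ Fin 4 where
  toFun | .mean => 0 | .diffPos => 1 | .diffNeg => 2 | .arg => 3
  invFun := ![.mean, .diffPos, .diffNeg, .arg]
  left_inv := by rintro (_ | _ | _ | _) <;> rfl
  right_inv := by intro i; fin_cases i <;> rfl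

def SqChan.equivOption (b : ℕ) : SqChan b ≃ Option (Fin b) where
  toFun | .hat i => some i | .acc => none
  invFun | some i => .hat i | none => .acc
  left_inv := by rintro (_ | _) <;> rfl
  right_inv := by rintro (_ | _) <;> rfl

def MulChan.equivOption (b : ℕ) : MulChan b ≃ Option (Bool × SqChan b) where
  toFun | .sq w c => some (w, c) | .arg => none
  invFun | some (w, c) => .sq w c | none => .arg
  left_inv := by rintro (_ | _) <;> rfl
  right_inv := by rintro (_ | _) <;> rfl

instance : Fintype QChan := .ofEquiv _ QChan.equivFin.symm
instance : Fintype PolarChan := .ofEquiv _ PolarChan.equivFin.symm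
instance (b : ℕ) : Fintype (SqChan b) := .ofEquiv _ (SqChan.equivOption b).symm
instance (b : ℕ) : Fintype (MulChan b) := .ofEquiv _ (MulChan.equivOption b).symm

lemma QChan.card_eq : Fintype.card QChan = 3 := by
  simp [Fintype.card_congr QChan.equivFin]

lemma PolarChan.card_eq : Fintype.card PolarChan = 4 := by
  simp [Fintype.card_congr PolarChan.equivFin]

lemma MulChan.card_eq (b : ℕ) : Fintype.card (MulChan b) = 2 * b + 3 := by
  simp [Fintype.card_congr (MulChan.equivOption b), Fintype.card_congr (SqChan.equivOption b)]
  ring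

section MulBlock

variable (b : ℕ)

def polarPre (y : QChan → ℝ) : PolarChan → ℝ
  | .mean => (y .pos - y .neg + y .arg) / 2
  | .diffPos => (y .pos - y .neg - y .arg) / 2
  | .diffNeg => (y .arg - (y .pos - y .neg)) / 2
  | .arg => y .arg

def sqInput (y : PolarChan → ℝ) : Bool → ℝ
  | true => y .mean
  | false => y .diffPos + y .diffNeg

def sqInitPre (y : PolarChan → ℝ) : MulChan b → ℝ
  | .sq w (.hat i) => sqInput y w - i / b
  | .sq w .acc => sqInput y w
  | .arg => y .arg

/-- One step of `sqApprox`: the ramps of `u` are replaced by those of `sawtooth b u`, and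
`c * parabolaInterp b u` is subtracted from the accumulator. -/
def sqStepPre (c : ℝ) (y : MulChan b → ℝ) : MulChan b → ℝ
  | .sq w (.hat i) => ∑ j : Fin b, sawtoothCoeff b j * y (.sq w (.hat j)) - i / b
  | .sq w .acc => y (.sq w .acc) - c * ∑ j : Fin b, parabolaCoeff b j * y (.sq w (.hat j))
  | .arg => y .arg

def recombinePre (y : MulChan b → ℝ) : QChan → ℝ
  | .pos => y (.sq true .acc) - y (.sq false .acc)
  | .neg => y (.sq true .acc) - y (.sq false .acc) - 1
  | .arg => y .arg

def sqLayers : ℕ → (PolarChan → ℝ) → MulChan b → ℝ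
  | 0 => reluLayer (sqInitPre b)
  | n + 1 => fun y => reluLayer (sqStepPre b (((b : ℝ) ^ 2)⁻¹ ^ n)) (sqLayers n y)

def mulBlock (m : ℕ) (y : QChan → ℝ) : QChan → ℝ :=
  reluLayer (recombinePre b) (sqLayers b m (reluLayer polarPre y))

def sqState (n : ℕ) (u : Bool → ℝ) (s : ℝ) : MulChan b → ℝ
  | .sq w (.hat i) => relu ((sawtooth b)^[n] (u w) - i / b)
  | .sq w .acc => sqApprox b n (u w)
  | .arg => s

variable {b}

lemma sqLayers_eq (hb : 0 < b) {y : PolarChan → ℝ}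
    (hu : ∀ w, sqInput y w ∈ Set.Icc (0 : ℝ) 1) (hs : 0 ≤ y .arg) (n : ℕ) :
    sqLayers b n y = sqState b n (sqInput y) (y .arg) := by
  have hacc : ∀ n w, relu (sqApprox b n (sqInput y w)) = sqApprox b n (sqInput y w) :=
    fun n w => relu_of_nonneg ((sq_nonneg _).trans (sq_le_sqApprox b n hb (hu w)))
  induction n with
  | zero =>
    funext c
    rcases c with ⟨w, _ | _⟩ | _
    · rfl
    · show relu (sqInput y w) = sqApprox b 0 (sqInput y w)
      rw [show sqApprox b 0 (sqInput y w) = sqInput y w by simp [sqApprox]]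
      exact relu_of_nonneg (hu w).1
    · exact relu_of_nonneg hs
  | succ n ih =>
    funext c
    simp only [sqLayers, ih]
    rcases c with ⟨w, _ | _⟩ | _
    · simp only [reluLayer, sqStepPre, sqState, Function.iterate_succ_apply']
      rfl
    · simp only [reluLayer, sqStepPre, sqState]
      rw [← hacc (n + 1) w, sqApprox_succ]
      rfl
    · exact relu_of_nonneg hs

def QEncodes (y : QChan → ℝ) (q s : ℝ) : Prop := y .pos - y .neg = q ∧ y .arg = s

lemma mulBlock_encodes (hb : 0 < b) (m : ℕ) {y : QChan → ℝ} {q s : ℝ} (hy : QEncodes y q s)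
    (hq : q ∈ Set.Icc (0 : ℝ) 1) (hs : s ∈ Set.Icc (0 : ℝ) 1) :
    QEncodes (mulBlock b m y) (clamp01 (mulApprox b m q s)) s := by
  obtain ⟨hq0, hq1⟩ := hq
  obtain ⟨hs0, hs1⟩ := hs
  obtain ⟨hyq, hys⟩ := hy
  set z := reluLayer polarPre y
  have hmean : sqInput z true = (q + s) / 2 := by
    simp only [z, sqInput, reluLayer, polarPre, hyq, hys]
    exact relu_of_nonneg (by linarith)
  have hdiff : sqInput z false = |(q - s) / 2| := by
    simp only [z, sqInput, reluLayer, polarPre, hyq, hys]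
    rw [← relu_add_relu_neg]
    ring_nf
  have harg : z .arg = s := by simp only [z, reluLayer, polarPre, hys, relu_of_nonneg hs0]
  have hu : ∀ w, sqInput z w ∈ Set.Icc (0 : ℝ) 1 := by
    rintro (_ | _)
    · rw [hdiff]
      exact ⟨abs_nonneg _, abs_le.2 ⟨by linarith, by linarith⟩⟩
    · rw [hmean]
      exact ⟨by linarith, by linarith⟩
  rw [mulBlock, sqLayers_eq hb hu (harg ▸ hs0)]
  refine ⟨?_, ?_⟩
  · simp only [reluLayer, recombinePre, sqState, hmean, hdiff]
    rfl
  · simp only [reluLayer, recombinePre, sqState, harg, relu_of_nonneg hs0]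

lemma iterate_mulBlock_encodes (hb : 0 < b) (m : ℕ) {y : QChan → ℝ} {s : ℝ}
    (hy : QEncodes y s s) (hs : s ∈ Set.Icc (0 : ℝ) 1) (j : ℕ) :
    QEncodes ((mulBlock b m)^[j] y) (powApprox b m j s) s := by
  induction j with
  | zero => exact hy
  | succ j ih =>
    rw [Function.iterate_succ_apply']
    exact mulBlock_encodes hb m ih (powApprox_mem_Icc b m hs j) hs

end MulBlock

section Assembly

variable {b k : ℕ}

variable (k) in
def rampPre (x : Fin 1 → ℝ) : Fin (k + 2) → ℝ := fun j => x 0 - j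

variable (k) in
/-- Branch `l` starts from `powApprox _ _ 0 s = s` with `s = scaledRamp k l x`. -/
def branchPre (y : Fin (k + 2) → ℝ) : Fin (k + 1) × QChan → ℝ
  | (l, .pos) => (y l.castSucc - y (Fin.last _)) / (k + 1)
  | (l, .neg) => (y l.castSucc - y (Fin.last _)) / (k + 1) - 1
  | (l, .arg) => (y l.castSucc - y (Fin.last _)) / (k + 1)

variable (k) in
def inputLayers (x : Fin 1 → ℝ) : Fin (k + 1) × QChan → ℝ :=
  reluLayer (branchPre k) (reluLayer (rampPre k) x)

lemma inputLayers_encodes (x : Fin 1 → ℝ) (l : Fin (k + 1)) :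
    QEncodes (fun c => inputLayers k x (l, c)) (scaledRamp k l (x 0)) (scaledRamp k l (x 0)) := by
  have hs : (reluLayer (rampPre k) x l.castSucc - reluLayer (rampPre k) x (Fin.last _)) / (k + 1) =
      scaledRamp k l (x 0) := by
    simp only [reluLayer, rampPre, scaledRamp, Fin.val_castSucc, Fin.val_last]
    push_cast
    rfl
  obtain ⟨h0, h1⟩ := scaledRamp_mem_Icc (k := k) (by omega : (l : ℕ) ≤ k + 1) (x 0)
  refine ⟨?_, ?_⟩
  · change relu (_ / _) - relu (_ / _ - 1) = _
    rw [hs]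
    exact clamp01_of_mem h0 h1
  · change relu (_ / _) = _
    rw [hs, relu_of_nonneg h0]

variable (k) in
def splineOut (C₀ C₁ : ℝ) (z : Fin (k + 1) × QChan → ℝ) : ℝ :=
  ∑ l : Fin (k + 1), splineWeight k l * (z (l, .pos) - z (l, .neg)) -
    C₀ - C₁ * ((k + 1) * z (Fin.last k, .arg))

variable (b k) in
def bsplineNet (m : ℕ) (C₀ C₁ : ℝ) (x : Fin 1 → ℝ) : ℝ :=
  splineOut k C₀ C₁ ((liftBranch (mulBlock b m))^[k - 2] (inputLayers k x))

lemma bsplineNet_eq (hb : 0 < b) (m : ℕ) (x : Fin 1 → ℝ) :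
    bsplineNet b k m (truncPowSumApprox b m k 0)
        (truncPowSumApprox b m k (k + 1) - truncPowSumApprox b m k 0) x =
      bsplineApprox b m k (x 0) := by
  have hbranch (l : Fin (k + 1)) :
      QEncodes (fun c => (liftBranch (mulBlock b m))^[k - 2] (inputLayers k x) (l, c))
        (powApprox b m (k - 2) (scaledRamp k l (x 0))) (scaledRamp k l (x 0)) := by
    rw [liftBranch_iterate]
    exact iterate_mulBlock_encodes hb m (inputLayers_encodes x l)
      (scaledRamp_mem_Icc (by omega) _) _
  have hsum : ∑ l : Fin (k + 1), splineWeight k l *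
      ((liftBranch (mulBlock b m))^[k - 2] (inputLayers k x) (l, .pos) -
        (liftBranch (mulBlock b m))^[k - 2] (inputLayers k x) (l, .neg)) =
      truncPowSumApprox b m k (x 0) := by
    rw [truncPowSumApprox,
      ← Fin.sum_univ_eq_sum_range (fun l => splineWeight k l * powApprox b m (k - 2) _)]
    exact sum_congr rfl fun l _ => congrArg _ (hbranch l).1
  have hlast : (k + 1) * (liftBranch (mulBlock b m))^[k - 2] (inputLayers k x) (Fin.last k, .arg) =
      clamp01 (x 0 - k) := by
    obtain ⟨-, harg⟩ := hbranch (Fin.last k)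
    dsimp only at harg
    rw [harg, Fin.val_last, add_one_mul_scaledRamp_self]
  rw [bsplineNet, splineOut, bsplineApprox, hsum, hlast]

lemma isReluBlock_inputLayers {W : ℕ} (hW : (k + 1) * 3 ≤ W) :
    IsReluBlock (inputLayers k) W 2 := by
  refine (isReluBlock_reluLayer (fun j => by unfold rampPre; fun_prop) ?_).comp
    (isReluBlock_reluLayer ?_ ?_)
  · simp only [Fintype.card_fin]
    omega
  · rintro ⟨l, _ | _ | _⟩ <;> unfold branchPre <;> fun_prop
  · rwa [Fintype.card_prod, Fintype.card_fin, QChan.card_eq]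

lemma isReluBlock_sqLayers {W : ℕ} (hW : (k + 1) * (2 * b + 3) ≤ W) (n : ℕ) :
    IsReluBlock (liftBranch (ι := Fin (k + 1)) (sqLayers b n)) W (n + 1) := by
  have hcard : Fintype.card (Fin (k + 1)) * Fintype.card (MulChan b) ≤ W := by
    rwa [Fintype.card_fin, MulChan.card_eq]
  induction n with
  | zero =>
    exact isReluBlock_liftBranch_reluLayer
      (by rintro (⟨_ | _, _ | _⟩ | _) <;> unfold sqInitPre sqInput <;> fun_prop) hcard
  | succ n ih =>
    exact ih.comp (isReluBlock_liftBranch_reluLayer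
      (by rintro (⟨_, _ | _⟩ | _) <;> unfold sqStepPre <;> fun_prop) hcard)

lemma isReluBlock_mulBlock {W : ℕ} (hb : 0 < b) (hW : (k + 1) * (2 * b + 3) ≤ W) (m : ℕ) :
    IsReluBlock (liftBranch (ι := Fin (k + 1)) (mulBlock b m)) W (m + 3) := by
  have hpolar := isReluBlock_liftBranch_reluLayer (ι := Fin (k + 1)) (T := polarPre) (W := W)
    (by rintro (_ | _ | _ | _) <;> unfold polarPre <;> fun_prop)
    (by rw [Fintype.card_fin, PolarChan.card_eq]; nlinarith)
  have hrecombine := isReluBlock_liftBranch_reluLayer (ι := Fin (k + 1)) (T := recombinePre b)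
    (W := W) (by rintro (_ | _ | _) <;> unfold recombinePre <;> fun_prop)
    (by rw [Fintype.card_fin, QChan.card_eq]; nlinarith)
  rw [show m + 3 = 1 + (m + 1) + 1 by ring]
  exact (hpolar.comp (isReluBlock_sqLayers hW m)).comp hrecombine

lemma reluNetExact_bsplineApprox (hb : 0 < b) {W : ℕ} (hW : (k + 1) * (2 * b + 3) ≤ W)
    (m : ℕ) :
    ReluNetExact 1 1 (fun x _ => bsplineApprox b m k (x 0)) W (2 + (k - 2) * (m + 3) + 1) := by
  have hnet : ReluNetExact 1 1 (fun x _ => bsplineNet b k m (truncPowSumApprox b m k 0)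
      (truncPowSumApprox b m k (k + 1) - truncPowSumApprox b m k 0) x) W _ :=
    ((isReluBlock_inputLayers (by nlinarith)).iterate_comp (isReluBlock_mulBlock hb hW m)
      (k - 2)).reluNetExact_comp (by unfold splineOut; fun_prop) (Equiv.refl _)
  simpa only [bsplineNet_eq hb] using hnet

end Assembly

lemma bsplineNet_depth_le {k L : ℕ} (hL : 0 < L) (hk : 3 ≤ k) :
    2 + (k - 2) * (4 * (k - 1) * L + 3) + 1 ≤ 7 * k ^ 2 * L := by
  obtain ⟨k, rfl⟩ := Nat.exists_eq_add_of_le hk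
  obtain ⟨L, rfl⟩ := Nat.exists_eq_add_of_lt hL
  simp only [show 3 + k - 2 = k + 1 by omega, show 3 + k - 1 = k + 2 by omega]
  nlinarith

lemma bsplineApprox_error_bound_le {N L k : ℕ} (hk : 3 ≤ k) :
    2 * (2 ^ k * ((k : ℝ) + 1) ^ (k - 1) / (k - 1).factorial *
        ((k - 2 : ℕ) * (1 / 2 * (((N + 1 : ℕ) : ℝ) ^ 2)⁻¹ ^ (4 * (k - 1) * L)))) ≤
      9 * ((2 * (k : ℝ) + 2) ^ k / ((k - 1).factorial : ℝ)) *
        ((N : ℝ) + 1) ^ (-(7 * ((k : ℤ) - 1) * (L : ℤ))) := by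
  have hM : (1 : ℝ) ≤ (N : ℝ) + 1 := by linarith [(N.cast_nonneg : (0 : ℝ) ≤ N)]
  have hδ : (((N + 1 : ℕ) : ℝ) ^ 2)⁻¹ ^ (4 * (k - 1) * L) ≤
      ((N : ℝ) + 1) ^ (-(7 * ((k : ℤ) - 1) * (L : ℤ))) := by
    have h8 : (((N + 1 : ℕ) : ℝ) ^ 2)⁻¹ ^ (4 * (k - 1) * L) =
        ((N : ℝ) + 1) ^ (-((8 * (k - 1) * L : ℕ) : ℤ)) := by
      rw [zpow_neg, zpow_natCast, inv_pow, ← pow_mul]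
      push_cast
      ring_nf
    rw [h8]
    refine zpow_le_zpow_right₀ hM ?_
    push_cast [Nat.cast_sub (by omega : 1 ≤ k)]
    nlinarith [(L.cast_nonneg : (0 : ℤ) ≤ L)]
  have hk2 : ((k - 2 : ℕ) : ℝ) ≤ 9 * ((k : ℝ) + 1) := by
    have : k - 2 ≤ 9 * (k + 1) := by omega
    exact_mod_cast this
  have hpow : (2 * (k : ℝ) + 2) ^ k = 2 ^ k * ((k : ℝ) + 1) ^ (k - 1) * ((k : ℝ) + 1) := by
    rw [mul_assoc, ← pow_succ, Nat.sub_add_cancel (by omega), ← mul_pow]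
    ring
  rw [hpow]
  calc _ = 2 ^ k * ((k : ℝ) + 1) ^ (k - 1) / (k - 1).factorial *
        ((k - 2 : ℕ) * (((N + 1 : ℕ) : ℝ) ^ 2)⁻¹ ^ (4 * (k - 1) * L)) := by ring
    _ ≤ 2 ^ k * ((k : ℝ) + 1) ^ (k - 1) / (k - 1).factorial *
        (9 * ((k : ℝ) + 1) * ((N : ℝ) + 1) ^ (-(7 * ((k : ℤ) - 1) * (L : ℤ)))) := by
      gcongr
    _ = _ := by ring

theorem stmt14_general (N L k : ℕ) (hL : 0 < L) (hk : 3 ≤ k) :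
    ∃ φ₁ : ℝ → ℝ,
      IsReluNet1 1 (fun v => φ₁ (v 0)) ((k + 1) * (9 * (N + 1) + k)) (7 * k ^ 2 * L) ∧
      (∀ x : ℝ, x ∉ Set.Icc (0:ℝ) ((k : ℝ) + 1) → φ₁ x = 0) ∧
      (∀ x : ℝ, |cardBspline k x - φ₁ x| ≤
        9 * ((2 * (k : ℝ) + 2) ^ k / ((k - 1).factorial : ℝ)) *
          ((N : ℝ) + 1) ^ (-(7 * ((k : ℤ) - 1) * (L : ℤ)))) := by
  have hb : 0 < N + 1 := N.succ_pos
  refine ⟨bsplineApprox (N + 1) (4 * (k - 1) * L) k, ⟨_, bsplineNet_depth_le hL hk, ?_⟩,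
    fun x hx => bsplineApprox_eq_zero hx,
    fun x => (abs_cardBspline_sub_bsplineApprox_le _ hb (by omega) x).trans
      (bsplineApprox_error_bound_le hk)⟩
  exact reluNetExact_bsplineApprox hb (Nat.mul_le_mul_left _ (by omega)) _

/-- approximation of the univariate B-spline `𝒩_k` by a ReLU network. -/
theorem stmt14 (N L k : ℕ) (hN : 0 < N) (hL : 0 < L) (hk : 3 ≤ k) :
    ∃ φ₁ : ℝ → ℝ,
      IsReluNet1 1 (fun v => φ₁ (v 0)) ((k + 1) * (9 * (N + 1) + k)) (7 * k ^ 2 * L) ∧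
      (∀ x : ℝ, x ∉ Set.Icc (0:ℝ) ((k : ℝ) + 1) → φ₁ x = 0) ∧
      (∀ x : ℝ, |cardBspline k x - φ₁ x| ≤
        9 * ((2 * (k : ℝ) + 2) ^ k / ((k - 1).factorial : ℝ)) *
          ((N : ℝ) + 1) ^ (-(7 * ((k : ℤ) - 1) * (L : ℤ)))) :=
  stmt14_general N L k hL hk
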